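/- Let l ≥ 2, let t, c̃, d̃, α₃, …, α_l be real numbers, and let W̃₃ be the l×l quaternion matrix c̃·E₁₂ + d̃·jG₁ − t·d̃·jG₂ + Σ_{q=3}^{l} α_q·iG_q, where E₁₂ has 1 in entry (1,2), −1 in entry (2,1), zeros elsewhere, and G_q has √2 in entry (q,q) and zeros elsewhere. Then the characteristic polynomial of the 2l×2l complex matrix dπ(W̃₃) equals (λ⁴ + 2(c̃² + d̃² + d̃²t²)λ² + (c̃² + 2d̃²t)²)·∏_{q=3}^{l}(λ² + 2α_q²). -/

import Mathlib

open Quaternion Matrix Polynomial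

/-- The quaternion unit `i`. -/
noncomputable def qi : ℍ[ℝ] := ⟨0, 1, 0, 0⟩
/-- The quaternion unit `j`. -/
noncomputable def qj : ℍ[ℝ] := ⟨0, 0, 1, 0⟩

/-- `G_q`: the `l × l` quaternion matrix with `√2` in entry `(q,q)` and zeros elsewhere. -/
noncomputable def Gmat (l : ℕ) (q : Fin l) : Matrix (Fin l) (Fin l) ℍ[ℝ] :=
  Matrix.single q q (((Real.sqrt 2 : ℝ) : ℍ[ℝ]))

/-- `E₁₂`: the `l × l` quaternion matrix with `1` in entry `(1,2)`, `−1` in entry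
`(2,1)` and zeros elsewhere. -/
noncomputable def Emat (l : ℕ) [NeZero l] (i j : Fin l) : Matrix (Fin l) (Fin l) ℍ[ℝ] :=
  Matrix.single i j 1 - Matrix.single j i 1

/-- The complex matrix `X` in the unique decomposition `W = X + jY` of a quaternion
matrix `W` (identifying `ℂ` with the real span of `1` and `i` in `ℍ`). -/
noncomputable def quatX (l : ℕ) (W : Matrix (Fin l) (Fin l) ℍ[ℝ]) :
    Matrix (Fin l) (Fin l) ℂ :=
  fun p q => ⟨(W p q).re, (W p q).imI⟩

/-- The complex matrix `Y` in the unique decomposition `W = X + jY` of a quaternion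
matrix `W`. -/
noncomputable def quatY (l : ℕ) (W : Matrix (Fin l) (Fin l) ℍ[ℝ]) :
    Matrix (Fin l) (Fin l) ℂ :=
  fun p q => ⟨(W p q).imJ, -(W p q).imK⟩

/-- The embedding `dπ : M_l(ℍ) → M_{2l}(ℂ)`, `W = X + jY ↦ [[X, −conj Y], [Y, conj X]]`. -/
noncomputable def dpi (l : ℕ) (W : Matrix (Fin l) (Fin l) ℍ[ℝ]) :
    Matrix (Fin l ⊕ Fin l) (Fin l ⊕ Fin l) ℂ :=
  Matrix.fromBlocks (quatX l W) (-(quatY l W).map (starRingEnd ℂ))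
    (quatY l W) ((quatX l W).map (starRingEnd ℂ))

/-!
Moving the indices `0, 1` to the front makes `W̃₃` block diagonal, with the `2 × 2` block
`!![√2 d̃ j, c̃; -c̃, -√2 t d̃ j]` and the diagonal block `diag(√2 α_q i)`. The map `dπ` acts
entrywise, so `dπ(W̃₃)` is conjugate to the direct sum of the images of the two blocks. A purely
`i`-imaginary diagonal entry `r i` contributes the eigenvalues `±r i`, i.e. the factor `λ² + r²`;
the `2 × 2` block becomes an explicit `4 × 4` complex matrix, expanded by cofactors.
-/

@[simp] lemma qi_re : qi.re = 0 := rfl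
@[simp] lemma qi_imI : qi.imI = 1 := rfl
@[simp] lemma qi_imJ : qi.imJ = 0 := rfl
@[simp] lemma qi_imK : qi.imK = 0 := rfl
@[simp] lemma qj_re : qj.re = 0 := rfl
@[simp] lemma qj_imI : qj.imI = 0 := rfl
@[simp] lemma qj_imJ : qj.imJ = 1 := rfl
@[simp] lemma qj_imK : qj.imK = 0 := rfl

def dpiBlockEquiv {k n l : ℕ} (e : Fin k ⊕ Fin n ≃ Fin l) :
    Fin l ⊕ Fin l ≃ (Fin k ⊕ Fin k) ⊕ (Fin n ⊕ Fin n) :=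
  (e.sumCongr e).symm.trans (Equiv.sumSumSumComm _ _ _ _)

lemma reindex_dpi_fromBlocks {k n l : ℕ} (e : Fin k ⊕ Fin n ≃ Fin l)
    (W₁ : Matrix (Fin k) (Fin k) ℍ[ℝ]) (W₂ : Matrix (Fin n) (Fin n) ℍ[ℝ]) :
    reindex (dpiBlockEquiv e) (dpiBlockEquiv e) (dpi l (reindex e e (fromBlocks W₁ 0 0 W₂))) =
      fromBlocks (dpi k W₁) 0 0 (dpi n W₂) := by
  ext ((i | i) | (i | i)) ((j | j) | (j | j)) <;>
    simp [dpiBlockEquiv, dpi, quatX, quatY, Complex.ext_iff]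

lemma charpoly_dpi_reindex_fromBlocks {k n l : ℕ} (e : Fin k ⊕ Fin n ≃ Fin l)
    (W₁ : Matrix (Fin k) (Fin k) ℍ[ℝ]) (W₂ : Matrix (Fin n) (Fin n) ℍ[ℝ]) :
    (dpi l (reindex e e (fromBlocks W₁ 0 0 W₂))).charpoly =
      (dpi k W₁).charpoly * (dpi n W₂).charpoly := by
  rw [← charpoly_reindex (dpiBlockEquiv e), reindex_dpi_fromBlocks, charpoly_fromBlocks_zero₂₁]

lemma dpi_diagonal_smul_qi {n : ℕ} (r : Fin n → ℝ) :
    dpi n (diagonal fun q => r q • qi) =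
      diagonal (Sum.elim (fun q => r q * Complex.I) (fun q => -(r q * Complex.I))) := by
  ext (i | i) (j | j) <;> by_cases h : i = j <;>
    simp [dpi, quatX, quatY, h, Complex.ext_iff]

lemma charpoly_dpi_diagonal_smul_qi {n : ℕ} (r : Fin n → ℝ) :
    (dpi n (diagonal fun q => r q • qi)).charpoly = ∏ q, (X ^ 2 + C ((r q ^ 2 : ℝ) : ℂ)) := by
  rw [dpi_diagonal_smul_qi, charpoly_diagonal, Fintype.prod_sum_type, ← Finset.prod_mul_distrib]
  refine Finset.prod_congr rfl fun q _ => ?_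
  simp only [Sum.elim_inl, Sum.elim_inr, map_neg, map_mul, Complex.ofReal_pow, map_pow]
  have hI : C Complex.I ^ 2 = -1 := by rw [← map_pow, Complex.I_sq, map_neg, map_one]
  linear_combination -C (r q : ℂ) ^ 2 * hI

lemma charpoly_fin_four_skew {R : Type*} [CommRing R] (a b c : R) :
    (!![0, a, -b, 0; -a, 0, 0, -c; b, 0, 0, a; 0, c, -a, 0]).charpoly =
      X ^ 4 + C (2 * a ^ 2 + b ^ 2 + c ^ 2) * X ^ 2 + C ((a ^ 2 - b * c) ^ 2) := by
  simp [charpoly, charmatrix, det_succ_row_zero, Fin.sum_univ_succ, Fin.succAbove, map_ofNat]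
  ring

lemma reindex_dpi_two (a b c : ℝ) :
    reindex finSumFinEquiv finSumFinEquiv
      (dpi 2 !![b • qj, (a : ℍ[ℝ]); -(a : ℍ[ℝ]), c • qj]) =
      !![0, (a : ℂ), -(b : ℂ), 0; -(a : ℂ), 0, 0, -(c : ℂ); (b : ℂ), 0, 0, (a : ℂ);
        0, (c : ℂ), -(a : ℂ), 0] := by
  ext i j
  fin_cases i <;> fin_cases j <;>
    simp [dpi, quatX, quatY, Complex.ext_iff, finSumFinEquiv, Fin.addCases]

lemma charpoly_dpi_two (a b c : ℝ) :
    (dpi 2 !![b • qj, (a : ℍ[ℝ]); -(a : ℍ[ℝ]), c • qj]).charpoly =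
      X ^ 4 + C ((2 * a ^ 2 + b ^ 2 + c ^ 2 : ℝ) : ℂ) * X ^ 2 +
        C (((a ^ 2 - b * c) ^ 2 : ℝ) : ℂ) := by
  rw [← charpoly_reindex finSumFinEquiv, reindex_dpi_two, charpoly_fin_four_skew]
  push_cast
  rfl

def finTwoSumEquiv (m : ℕ) : Fin 2 ⊕ Fin m ≃ Fin (m + 2) :=
  finSumFinEquiv.trans (finCongr (Nat.add_comm 2 m))

@[simp] lemma finTwoSumEquiv_inl_zero (m : ℕ) : finTwoSumEquiv m (.inl 0) = 0 := rfl
@[simp] lemma finTwoSumEquiv_inl_one (m : ℕ) : finTwoSumEquiv m (.inl 1) = 1 := rfl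
@[simp] lemma finTwoSumEquiv_inr (m : ℕ) (q : Fin m) :
    finTwoSumEquiv m (.inr q) = q.succ.succ := by
  ext; simp [finTwoSumEquiv]

@[to_additive Fin.sum_univ_sdiff_zero_one]
lemma Fin.prod_univ_sdiff_zero_one {M : Type*} [CommMonoid M] {m : ℕ} (f : Fin (m + 2) → M) :
    ∏ q ∈ Finset.univ \ {0, 1}, f q = ∏ q : Fin m, f q.succ.succ := by
  have h : (Finset.univ \ {0, 1} : Finset (Fin (m + 2))) =
      Finset.univ.image fun q : Fin m => q.succ.succ := by
    ext q
    cases q using Fin.cases with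
    | zero => simp
    | succ q => cases q using Fin.cases with
      | zero => simp [Fin.succ_succ_ne_one]
      | succ q => simp [Fin.succ_succ_ne_one]
  rw [h, Finset.prod_image fun _ _ _ _ h => Fin.succ_injective _ (Fin.succ_injective _ h)]

lemma tildeW3_eq_reindex_fromBlocks (m : ℕ) (t ct dt : ℝ) (α : Fin (m + 2) → ℝ) :
    ct • Emat (m + 2) 0 1 + dt • (qj • Gmat (m + 2) 0) - (t * dt) • (qj • Gmat (m + 2) 1) +
      ∑ q ∈ Finset.univ \ {0, 1}, α q • (qi • Gmat (m + 2) q) =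
    reindex (finTwoSumEquiv m) (finTwoSumEquiv m)
      (fromBlocks !![(dt * √2) • qj, (ct : ℍ[ℝ]); -(ct : ℍ[ℝ]), (-(t * dt * √2)) • qj] 0 0
        (diagonal fun q => (α q.succ.succ * √2) • qi)) := by
  rw [Fin.sum_univ_sdiff_zero_one]
  refine Matrix.ext fun i j => ?_
  obtain ⟨i, rfl⟩ := (finTwoSumEquiv m).surjective i
  obtain ⟨j, rfl⟩ := (finTwoSumEquiv m).surjective j
  simp only [reindex_apply, submatrix_apply, Equiv.symm_apply_apply]
  rcases i with i | i <;> rcases j with j | j <;> (try fin_cases i) <;> (try fin_cases j) <;>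
    simp [Emat, Gmat, Matrix.sum_apply, single_apply, diagonal_apply, ite_and,
      Fin.succ_succ_ne_one, (Fin.succ_succ_ne_one _).symm, (Fin.succ_ne_zero _).symm,
      Quaternion.mul_coe_eq_smul, smul_smul, ← Algebra.algebraMap_eq_smul_one,
      Quaternion.algebraMap_def]

-- The paper's indices `1, …, l` are `0, …, m + 1 : Fin (m + 2)`.
/-- Statement 16 (item 3) of Proposition `char` of the paper): the characteristic
polynomial of `dπ(W̃₃)` for `W̃₃ = c̃·E₁₂ + d̃·jG₁ − t·d̃·jG₂ + Σ_{q=3}^{l} α_q·iG_q`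
(in the paper `t = (x₂ − x₁)/x₁`, but the identity holds for every real `t`).
Here `l = m + 2 ≥ 2` and the index `q = 1, …, l` of the paper corresponds to
`q : Fin (m + 2)`, the first index being `0`. -/
theorem stmt_16 (m : ℕ) (t ct dt : ℝ) (α : Fin (m + 2) → ℝ)
    (W : Matrix (Fin (m + 2)) (Fin (m + 2)) ℍ[ℝ])
    (hW : W = ct • Emat (m + 2) 0 1 + dt • (qj • Gmat (m + 2) 0) -
      (t * dt) • (qj • Gmat (m + 2) 1) +
      ∑ q ∈ Finset.univ \ {0, 1}, α q • (qi • Gmat (m + 2) q)) :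
    (dpi (m + 2) W).charpoly =
      (X ^ 4 + C ((2 * (ct ^ 2 + dt ^ 2 + dt ^ 2 * t ^ 2) : ℝ) : ℂ) * X ^ 2 +
          C (((ct ^ 2 + 2 * dt ^ 2 * t) ^ 2 : ℝ) : ℂ)) *
        ∏ q ∈ Finset.univ \ {0, 1}, (X ^ 2 + C ((2 * (α q) ^ 2 : ℝ) : ℂ)) := by
  have hsqrt : √2 ^ 2 = 2 := Real.sq_sqrt zero_le_two
  rw [hW, tildeW3_eq_reindex_fromBlocks, charpoly_dpi_reindex_fromBlocks, charpoly_dpi_two,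
    charpoly_dpi_diagonal_smul_qi, Fin.prod_univ_sdiff_zero_one]
  congr 5
  · congr 1
    linear_combination (dt ^ 2 + t ^ 2 * dt ^ 2) * hsqrt
  · linear_combination t * dt ^ 2 * hsqrt
  · ext q
    rw [mul_pow, hsqrt, mul_comm]
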